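/- The map F̄ on (1/2, 1] × [−1, ∞) defined by F̄(x,y) = (1/x − 1, 1/(1+y)) for x ∈ (1/2, 2/3] and F̄(x,y) = (−1/x + 2, −1/(2+y)) for x ∈ (2/3, 1] preserves the measure with density 1/(1+xy)² with respect to two-dimensional Lebesgue measure. -/

import Mathlib

/-!
Each branch of `dualNatExt` is a product map `(x, y) ↦ (k + ε / x, 1 / (ε y - k))`, with
`(ε, k) = (1, -1)` for `x ≤ 2/3` and `(ε, k) = (-1, 2)` for `x > 2/3`. Its Jacobian determinant
`ε² / (x² (ε y - k)²)` is exactly the factor by which `(1 + x y)²` changes, since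
`1 + x' y' = ε (1 + x y) / (x (ε y - k))`. By change of variables the two branches carry the density
`1 / (1 + x y)²` on the halves `x < 2/3` and `x > 2/3` of the domain to the same density on the
halves `y > 0` and `y < 0`, and up to null lines each pair of halves tiles the domain.
-/

open MeasureTheory

/-- The natural extension F̄ of the dual Gauss map F*, on (1/2,1] × [-1,∞). -/
noncomputable def dualNatExt (p : ℝ × ℝ) : ℝ × ℝ :=
  if p.1 ≤ 2 / 3 then (1 / p.1 - 1, 1 / (1 + p.2))
  else (-1 / p.1 + 2, -1 / (2 + p.2))

open Set
open scoped ENNReal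

theorem lintegral_image_prodMap_eq_lintegral_abs_deriv_mul {f g f' g' : ℝ → ℝ}
    {s : Set (ℝ × ℝ)} (hs : MeasurableSet s)
    (hf : ∀ p ∈ s, HasDerivAt f (f' p.1) p.1) (hg : ∀ p ∈ s, HasDerivAt g (g' p.2) p.2)
    (hinj : InjOn (Prod.map f g) s) (φ : ℝ × ℝ → ℝ≥0∞) :
    ∫⁻ q in Prod.map f g '' s, φ q =
      ∫⁻ p in s, ENNReal.ofReal |f' p.1 * g' p.2| * φ (Prod.map f g p) := by
  rw [lintegral_image_eq_lintegral_abs_det_fderiv_mul volume hs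
    (fun p hp => ((hf p hp).hasFDerivAt.prodMap p (hg p hp).hasFDerivAt).hasFDerivWithinAt) hinj]
  simp [ContinuousLinearMap.det, LinearMap.det_prodMap]

theorem hasDerivAt_const_add_div {𝕜 : Type*} [NontriviallyNormedField 𝕜] {ε k x : 𝕜}
    (hx : x ≠ 0) :
    HasDerivAt (fun x => k + ε / x) (-ε / x ^ 2) x := by
  simpa [div_eq_mul_inv] using ((hasDerivAt_inv hx).const_mul ε).const_add k

theorem hasDerivAt_one_div_mul_sub {𝕜 : Type*} [NontriviallyNormedField 𝕜] {ε k y : 𝕜}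
    (hy : ε * y - k ≠ 0) :
    HasDerivAt (fun y => 1 / (ε * y - k)) (-ε / (ε * y - k) ^ 2) y := by
  simpa [one_div, neg_div, div_eq_inv_mul, Function.comp_def] using
    (hasDerivAt_inv hy).comp y (((hasDerivAt_id y).const_mul ε).sub_const k)

theorem Ioc_ae_eq_Ioo_union_Ioo {α : Type*} [MeasurableSpace α] [LinearOrder α]
    {μ : Measure α} [NullSingletonClass μ] {a b c : α} (hab : a ≤ b) (hbc : b ≤ c) :
    Ioc a c =ᵐ[μ] (Ioo a b ∪ Ioo b c : Set α) := by
  rw [← Ioc_union_Ioc_eq_Ioc hab hbc]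
  exact (Ioo_ae_eq_Ioc.union Ioo_ae_eq_Ioc).symm

theorem Ici_ae_eq_Ioo_union_Ioi {α : Type*} [MeasurableSpace α] [LinearOrder α]
    {μ : Measure α} [NullSingletonClass μ] {a b : α} (hab : a ≤ b) :
    Ici a =ᵐ[μ] (Ioo a b ∪ Ioi b : Set α) := by
  refine Ioi_ae_eq_Ici.symm.trans ?_
  rw [← Ioc_union_Ioi_eq_Ioi hab]
  exact (Ioo_ae_eq_Ioc.union (ae_eq_refl _)).symm

noncomputable def dualGaussDensity (p : ℝ × ℝ) : ℝ≥0∞ :=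
  ENNReal.ofReal (1 / (1 + p.1 * p.2) ^ 2)

noncomputable def natExtBranch (ε k : ℝ) : ℝ × ℝ → ℝ × ℝ :=
  Prod.map (fun x => k + ε / x) (fun y => 1 / (ε * y - k))

section natExtBranch

variable {ε k : ℝ}

theorem measurable_natExtBranch : Measurable (natExtBranch ε k) := by
  unfold natExtBranch
  fun_prop

theorem injective_natExtBranch (hε : ε ≠ 0) : Function.Injective (natExtBranch ε k) := by
  refine Function.Injective.prodMap (fun x x' h => ?_) (fun y y' h => ?_)
  · simpa [hε, div_eq_mul_inv] using h
  · simpa [hε] using h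

theorem one_add_mul_natExtBranch {p : ℝ × ℝ} (hx : p.1 ≠ 0) (hy : ε * p.2 - k ≠ 0) :
    1 + (natExtBranch ε k p).1 * (natExtBranch ε k p).2 =
      ε * (1 + p.1 * p.2) / (p.1 * (ε * p.2 - k)) := by
  simp only [natExtBranch, Prod.map_fst, Prod.map_snd]
  field_simp
  ring

theorem ofReal_abs_jacobian_mul_dualGaussDensity_natExtBranch {p : ℝ × ℝ} (hε : ε ≠ 0)
    (hx : p.1 ≠ 0) (hy : ε * p.2 - k ≠ 0) :
    ENNReal.ofReal |-ε / p.1 ^ 2 * (-ε / (ε * p.2 - k) ^ 2)| *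
      dualGaussDensity (natExtBranch ε k p) = dualGaussDensity p := by
  have hjac : -ε / p.1 ^ 2 * (-ε / (ε * p.2 - k) ^ 2) = (ε / (p.1 * (ε * p.2 - k))) ^ 2 := by
    field_simp
  rw [dualGaussDensity, dualGaussDensity, one_add_mul_natExtBranch hx hy, hjac, abs_sq,
    ← ENNReal.ofReal_mul (sq_nonneg _)]
  -- where `1 + x y = 0`, both sides are the junk value `ofReal (1 / 0) = 0`
  rcases eq_or_ne (1 + p.1 * p.2) 0 with h | h
  · simp [h]
  · field_simp

theorem setLIntegral_dualGaussDensity_inter_preimage_natExtBranch (hε : ε ≠ 0)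
    {S A : Set (ℝ × ℝ)} (hS : MeasurableSet S) (hS₀ : ∀ p ∈ S, p.1 ≠ 0 ∧ ε * p.2 - k ≠ 0)
    (hA : MeasurableSet A) :
    ∫⁻ p in S ∩ natExtBranch ε k ⁻¹' A, dualGaussDensity p =
      ∫⁻ p in natExtBranch ε k '' S ∩ A, dualGaussDensity p := by
  have hSA : MeasurableSet (S ∩ natExtBranch ε k ⁻¹' A) := hS.inter (measurable_natExtBranch hA)
  rw [← image_inter_preimage]
  unfold natExtBranch at hSA ⊢
  rw [lintegral_image_prodMap_eq_lintegral_abs_deriv_mul (f' := fun x => -ε / x ^ 2)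
    (g' := fun y => -ε / (ε * y - k) ^ 2) hSA
    (fun p hp => hasDerivAt_const_add_div (hS₀ p hp.1).1)
    (fun p hp => hasDerivAt_one_div_mul_sub (hS₀ p hp.1).2) (injective_natExtBranch hε).injOn]
  exact (setLIntegral_congr_fun hSA fun p hp =>
    ofReal_abs_jacobian_mul_dualGaussDensity_natExtBranch hε (hS₀ p hp.1).1 (hS₀ p hp.1).2).symm

end natExtBranch

theorem dualNatExt_eqOn_left : EqOn dualNatExt (natExtBranch 1 (-1)) {p | p.1 ≤ 2 / 3} := by
  intro p (hp : p.1 ≤ 2 / 3)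
  rw [dualNatExt, if_pos hp]
  ext
  · simp only [natExtBranch, Prod.map_fst]; ring
  · simp only [natExtBranch, Prod.map_snd]; ring

theorem dualNatExt_eqOn_right : EqOn dualNatExt (natExtBranch (-1) 2) {p | 2 / 3 < p.1} := by
  intro p (hp : 2 / 3 < p.1)
  rw [dualNatExt, if_neg hp.not_ge]
  ext
  · simp only [natExtBranch, Prod.map_fst]; ring
  · simp only [natExtBranch, Prod.map_snd]
    rw [show -1 * p.2 - 2 = -(2 + p.2) by ring, div_neg, neg_div]

theorem natExtBranch_image_left :
    natExtBranch 1 (-1) '' (Ioo (1 / 2) (2 / 3) ×ˢ Ioi (-1)) = Ioo (1 / 2) 1 ×ˢ Ioi 0 := by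
  rw [natExtBranch, prodMap_image_prod]
  congr 1
  · ext u
    constructor
    · rintro ⟨x, ⟨h₁, h₂⟩, rfl⟩
      have hx : 0 < x := by linarith
      constructor
      · rw [lt_neg_add_iff_add_lt, lt_div_iff₀ hx]; linarith
      · rw [neg_add_lt_iff_lt_add, div_lt_iff₀ hx]; linarith
    · rintro ⟨h₁, h₂⟩
      refine ⟨1 / (1 + u), ⟨?_, ?_⟩, by simp⟩
      · rw [lt_div_iff₀ (by linarith)]; linarith
      · rw [div_lt_iff₀ (by linarith)]; linarith
  · ext v
    constructor
    · rintro ⟨y, hy : -1 < y, rfl⟩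
      show 0 < 1 / (1 * y - -1)
      exact one_div_pos.2 (by linarith)
    · intro (hv : 0 < v)
      exact ⟨1 / v - 1, show -1 < 1 / v - 1 by simpa, by simp⟩

theorem natExtBranch_image_right :
    natExtBranch (-1) 2 '' (Ioo (2 / 3) 1 ×ˢ Ioi (-1)) = Ioo (1 / 2) 1 ×ˢ Ioo (-1) 0 := by
  rw [natExtBranch, prodMap_image_prod]
  congr 1
  · ext u
    constructor
    · rintro ⟨x, ⟨h₁, h₂⟩, rfl⟩
      have hx : 0 < x := by linarith
      simp only [mem_Ioo, neg_div, ← sub_eq_add_neg]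
      constructor
      · rw [lt_sub_comm, div_lt_iff₀ hx]; linarith
      · rw [sub_lt_comm, lt_div_iff₀ hx]; linarith
    · rintro ⟨h₁, h₂⟩
      refine ⟨1 / (2 - u), ⟨?_, ?_⟩, by simp⟩
      · rw [lt_div_iff₀ (by linarith)]; linarith
      · rw [div_lt_iff₀ (by linarith)]; linarith
  · ext v
    constructor
    · rintro ⟨y, hy : -1 < y, rfl⟩
      constructor
      · rw [lt_div_iff_of_neg (by linarith)]; linarith
      · exact one_div_neg.2 (by linarith)
    · rintro ⟨h₁, h₂⟩
      refine ⟨-1 / v - 2, ?_, by simp [neg_div]⟩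
      show -1 < -1 / v - 2
      rw [lt_sub_iff_add_lt, lt_div_iff_of_neg h₂]; linarith

theorem dualNatExt_preimage_inter_ae_eq (A : Set (ℝ × ℝ)) :
    (dualNatExt ⁻¹' A ∩ Ioc (1 / 2) 1 ×ˢ Ici (-1) : Set (ℝ × ℝ)) =ᵐ[volume]
      (Ioo (1 / 2) (2 / 3) ×ˢ Ioi (-1) ∩ natExtBranch 1 (-1) ⁻¹' A ∪
        Ioo (2 / 3) 1 ×ˢ Ioi (-1) ∩ natExtBranch (-1) 2 ⁻¹' A : Set (ℝ × ℝ)) := by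
  have hD : (Ioc (1 / 2 : ℝ) 1 ×ˢ Ici (-1 : ℝ) : Set (ℝ × ℝ)) =ᵐ[volume]
      (Ioo (1 / 2) (2 / 3) ×ˢ Ioi (-1) ∪ Ioo (2 / 3) 1 ×ˢ Ioi (-1) : Set (ℝ × ℝ)) := by
    rw [← union_prod]
    exact Measure.set_prod_ae_eq (Ioc_ae_eq_Ioo_union_Ioo (by norm_num) (by norm_num))
      Ioi_ae_eq_Ici.symm
  rw [← (dualNatExt_eqOn_left.mono fun p hp => hp.1.2.le).inter_preimage_eq,
    ← (dualNatExt_eqOn_right.mono fun p hp => hp.1.1).inter_preimage_eq,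
    ← union_inter_distrib_right, inter_comm]
  exact hD.inter (ae_eq_refl _)

theorem ae_eq_upper_union_lower_of_subset {A : Set (ℝ × ℝ)}
    (hA : A ⊆ Ioc (1 / 2) 1 ×ˢ Ici (-1)) :
    A =ᵐ[volume] (Ioo (1 / 2) 1 ×ˢ Ioi 0 ∩ A ∪ Ioo (1 / 2) 1 ×ˢ Ioo (-1) 0 ∩ A : Set (ℝ × ℝ)) := by
  have hD : (Ioc (1 / 2 : ℝ) 1 ×ˢ Ici (-1 : ℝ) : Set (ℝ × ℝ)) =ᵐ[volume]
      (Ioo (1 / 2) 1 ×ˢ Ioi 0 ∪ Ioo (1 / 2) 1 ×ˢ Ioo (-1) 0 : Set (ℝ × ℝ)) := by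
    rw [← prod_union, union_comm]
    exact Measure.set_prod_ae_eq Ioo_ae_eq_Ioc.symm (Ici_ae_eq_Ioo_union_Ioi (by norm_num))
  rw [← union_inter_distrib_right]
  nth_rw 1 [← inter_eq_right.2 hA]
  exact hD.inter (ae_eq_refl A)

/-- F̄ preserves the measure with density 1/(1+xy)² on (1/2,1] × [-1,∞). -/
theorem dualNatExt_invariant_measure :
    ∀ A : Set (ℝ × ℝ), MeasurableSet A →
      A ⊆ Set.Ioc (1 / 2 : ℝ) 1 ×ˢ Set.Ici (-1 : ℝ) →
      ∫⁻ p in dualNatExt ⁻¹' A ∩ Set.Ioc (1 / 2 : ℝ) 1 ×ˢ Set.Ici (-1 : ℝ),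
        ENNReal.ofReal (1 / (1 + p.1 * p.2) ^ 2) =
      ∫⁻ p in A, ENNReal.ofReal (1 / (1 + p.1 * p.2) ^ 2) := by
  intro A hA hAD
  have hleft : ∀ p ∈ Ioo (1 / 2 : ℝ) (2 / 3) ×ˢ Ioi (-1 : ℝ), p.1 ≠ 0 ∧ 1 * p.2 - -1 ≠ 0 :=
    fun p ⟨⟨hx, _⟩, (hy : -1 < p.2)⟩ => ⟨by linarith, by linarith⟩
  have hright : ∀ p ∈ Ioo (2 / 3 : ℝ) 1 ×ˢ Ioi (-1 : ℝ), p.1 ≠ 0 ∧ -1 * p.2 - 2 ≠ 0 :=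
    fun p ⟨⟨hx, _⟩, (hy : -1 < p.2)⟩ => ⟨by linarith, by linarith⟩
  have hSdisj : Disjoint (Ioo (1 / 2 : ℝ) (2 / 3) ×ˢ Ioi (-1 : ℝ)) (Ioo (2 / 3) 1 ×ˢ Ioi (-1)) :=
    disjoint_prod.2 (.inl (Ioo_disjoint_Ioo.2 (by norm_num)))
  have hRdisj : Disjoint (Ioo (1 / 2 : ℝ) 1 ×ˢ Ioi (0 : ℝ)) (Ioo (1 / 2) 1 ×ˢ Ioo (-1) 0) :=
    disjoint_prod.2 (.inr (Ioi_disjoint_Iio_same.mono_right Ioo_subset_Iio_self))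
  change ∫⁻ p in _, dualGaussDensity p = ∫⁻ p in A, dualGaussDensity p
  rw [setLIntegral_congr (dualNatExt_preimage_inter_ae_eq A),
    setLIntegral_congr (ae_eq_upper_union_lower_of_subset hAD),
    lintegral_union ((measurableSet_Ioo.prod measurableSet_Ioi).inter (measurable_natExtBranch hA))
      (hSdisj.mono inter_subset_left inter_subset_left),
    lintegral_union ((measurableSet_Ioo.prod measurableSet_Ioo).inter hA)
      (hRdisj.mono inter_subset_left inter_subset_left),
    setLIntegral_dualGaussDensity_inter_preimage_natExtBranch one_ne_zero
      (measurableSet_Ioo.prod measurableSet_Ioi) hleft hA,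
    setLIntegral_dualGaussDensity_inter_preimage_natExtBranch (by norm_num)
      (measurableSet_Ioo.prod measurableSet_Ioi) hright hA,
    natExtBranch_image_left, natExtBranch_image_right]
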